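/- Let 0<γ<1. For all t, s ∈ [0,1], the Caputo derivative of order γ in the first variable of the kernel H satisfies |ᶜDᵞₜH(t,s)| ≤ 3/Γ(2−γ). -/

import Mathlib

open MeasureTheory Set intervalIntegral

/-!
Away from the diagonal `r = s` the map `r ↦ H(r,s)` is affine with slope `s - 1` or `s - 2`,
so `|∂ᵣH| ≤ 2` almost everywhere. A Caputo derivative of order `γ < 1` of a function with
a.e. bounded derivative is controlled by `(1/Γ(1-γ)) ∫₀ᵗ (t-r)^(-γ) dr = t^(1-γ)/Γ(2-γ)`.
-/

/-- Kernel `H` associated to the fractional BVP. -/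
noncomputable def kernelH (t s : ℝ) : ℝ :=
  if s ≤ t then (t - s) + (1 - t) * (2 - s) else (1 - t) * (2 - s)

/-- Caputo fractional derivative of order `γ ∈ (0,1)`. -/
noncomputable def caputo (γ : ℝ) (u : ℝ → ℝ) (t : ℝ) : ℝ :=
  (1 / Real.Gamma (1 - γ)) * ∫ s in (0:ℝ)..t, (t - s) ^ (-γ) * deriv u s

/-- Caputo derivative of order `γ` of the kernel `H` in its first variable. -/
noncomputable def caputoH (γ t s : ℝ) : ℝ :=
  caputo γ (fun r => kernelH r s) t

lemma deriv_kernelH_of_ne {r s : ℝ} (hr : r ≠ s) :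
    deriv (fun x => kernelH x s) r = if s ≤ r then s - 1 else s - 2 := by
  rcases lt_or_gt_of_ne hr with h | h
  · have hev : (fun x => kernelH x s) =ᶠ[nhds r] fun x => (1 - x) * (2 - s) := by
      filter_upwards [Iio_mem_nhds h] with x hx
      simp [kernelH, not_le.mpr (mem_Iio.mp hx)]
    have hd : HasDerivAt (fun x : ℝ => (1 - x) * (2 - s)) (-1 * (2 - s)) r :=
      ((hasDerivAt_id r).const_sub 1).mul_const _
    rw [hev.deriv_eq, hd.deriv, if_neg (not_le.mpr h)]
    ring
  · have hev : (fun x => kernelH x s) =ᶠ[nhds r] fun x => (x - s) + (1 - x) * (2 - s) := by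
      filter_upwards [Ioi_mem_nhds h] with x hx
      simp [kernelH, (mem_Ioi.mp hx).le]
    have hd : HasDerivAt (fun x : ℝ => (x - s) + (1 - x) * (2 - s)) (1 + -1 * (2 - s)) r :=
      ((hasDerivAt_id r).sub_const s).add (((hasDerivAt_id r).const_sub 1).mul_const _)
    rw [hev.deriv_eq, hd.deriv, if_pos h.le]
    ring

lemma ae_abs_deriv_kernelH_le {s : ℝ} (hs : s ∈ Icc (0:ℝ) 1) :
    ∀ᵐ r : ℝ, |deriv (fun x => kernelH x s) r| ≤ 2 := by
  have hne : ∀ᵐ r : ℝ, r ≠ s := by simp [ae_iff]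
  filter_upwards [hne] with r hr
  rw [deriv_kernelH_of_ne hr, abs_le]
  obtain ⟨hs0, hs1⟩ := hs
  split_ifs <;> constructor <;> linarith

lemma intervalIntegrable_sub_rpow_neg {γ : ℝ} (hγ : γ < 1) (t : ℝ) :
    IntervalIntegrable (fun r => (t - r) ^ (-γ)) volume 0 t := by
  have hrpow : IntervalIntegrable (fun x : ℝ => x ^ (-γ)) volume 0 t :=
    intervalIntegrable_rpow' (by linarith)
  simpa using (hrpow.comp_sub_left t).symm

lemma integral_sub_rpow_neg {γ : ℝ} (hγ : γ < 1) (t : ℝ) :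
    ∫ r in (0:ℝ)..t, (t - r) ^ (-γ) = t ^ (1 - γ) / (1 - γ) := by
  rw [intervalIntegral.integral_comp_sub_left (fun x : ℝ => x ^ (-γ)),
    integral_rpow (Or.inl (by linarith : (-1:ℝ) < -γ)), sub_self, sub_zero,
    Real.zero_rpow (by linarith : -γ + 1 ≠ 0), sub_zero, neg_add_eq_sub]

lemma Real.Gamma_two_sub {γ : ℝ} (hγ : γ < 1) :
    Real.Gamma (2 - γ) = (1 - γ) * Real.Gamma (1 - γ) := by
  rw [show (2:ℝ) - γ = (1 - γ) + 1 by ring, Real.Gamma_add_one (by linarith)]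

theorem abs_caputo_le {γ M t : ℝ} {u : ℝ → ℝ} (hγ : γ < 1) (ht : 0 ≤ t)
    (hu : ∀ᵐ r, |deriv u r| ≤ M) :
    |caputo γ u t| ≤ M * t ^ (1 - γ) / Real.Gamma (2 - γ) := by
  have hΓ : 0 < Real.Gamma (1 - γ) := Real.Gamma_pos_of_pos (by linarith)
  have hintegral : |∫ r in (0:ℝ)..t, (t - r) ^ (-γ) * deriv u r|
      ≤ ∫ r in (0:ℝ)..t, M * (t - r) ^ (-γ) := by
    rw [← Real.norm_eq_abs]
    refine norm_integral_le_of_norm_le ht ?_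
      ((intervalIntegrable_sub_rpow_neg hγ t).const_mul M)
    filter_upwards [hu] with r hr hrt
    have hpos : 0 ≤ (t - r) ^ (-γ) := Real.rpow_nonneg (by linarith [hrt.2]) _
    rw [Real.norm_eq_abs, abs_mul, abs_of_nonneg hpos, mul_comm M]
    exact mul_le_mul_of_nonneg_left hr hpos
  rw [intervalIntegral.integral_const_mul, integral_sub_rpow_neg hγ] at hintegral
  rw [caputo, abs_mul, abs_of_pos (one_div_pos.mpr hΓ), Real.Gamma_two_sub hγ]
  calc 1 / Real.Gamma (1 - γ) * |∫ r in (0:ℝ)..t, (t - r) ^ (-γ) * deriv u r|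
      ≤ 1 / Real.Gamma (1 - γ) * (M * (t ^ (1 - γ) / (1 - γ))) := by gcongr
    _ = M * t ^ (1 - γ) / ((1 - γ) * Real.Gamma (1 - γ)) := by field_simp

theorem caputoH_bound_general (γ : ℝ) (hγ2 : γ < 1) :
    ∀ t ∈ Icc (0:ℝ) 1, ∀ s ∈ Icc (0:ℝ) 1,
      |caputoH γ t s| ≤ 3 / Real.Gamma (2 - γ) := by
  rintro t ⟨ht0, ht1⟩ s hs
  have hΓ : 0 < Real.Gamma (2 - γ) := Real.Gamma_pos_of_pos (by linarith)
  have htpow : t ^ (1 - γ) ≤ 1 := Real.rpow_le_one ht0 ht1 (by linarith)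
  calc |caputoH γ t s| ≤ 2 * t ^ (1 - γ) / Real.Gamma (2 - γ) :=
        abs_caputo_le hγ2 ht0 (ae_abs_deriv_kernelH_le hs)
    _ ≤ 3 / Real.Gamma (2 - γ) := by gcongr; linarith

/-- For `0 < γ < 1`, the Caputo derivative of order `γ` of the kernel `H` in its
first variable satisfies `|ᶜDᵞₜH(t,s)| ≤ 3/Γ(2−γ)` on the unit square. -/
theorem caputoH_bound (γ : ℝ) (hγ1 : 0 < γ) (hγ2 : γ < 1) :
    ∀ t ∈ Icc (0:ℝ) 1, ∀ s ∈ Icc (0:ℝ) 1,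
      |caputoH γ t s| ≤ 3 / Real.Gamma (2 - γ) :=
  caputoH_bound_general γ hγ2
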